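/- arXiv:1511.02337 — 3 statements merged into one kernel-verified Lean document; each statement's English description precedes it below -/
import Mathlib

section
/- Let X(μ) be a σ-order continuous quasi-Banach function space, q ∈ (0,∞), and let Z(ξ) be a quasi-Banach function space over a measure ξ on the same measurable space with μ ≪ ξ. Then the following are equivalent: (a) the map [i]: Z(ξ) → X(μ) (taking the ξ-a.e. class of a function to its μ-a.e. class) is well defined and q-concave; (b) the map [i]: Z(ξ) → qX(μ) is well defined. -/
open MeasureTheory Filter Topology

variable {Ω : Type*} [MeasurableSpace Ω]

/-- A quasi-Banach function space over the measure `μ`: a complete quasi-normed ideal of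
(a.e.-classes of) measurable real functions.  Membership and the quasi-norm are given on
raw functions and are invariant under `μ`-a.e. equality. -/
structure QBFS (μ : Measure Ω) where
  Mem : (Ω → ℝ) → Prop
  nrm : (Ω → ℝ) → ℝ
  mem_congr : ∀ {f g : Ω → ℝ}, Mem f → f =ᵐ[μ] g → Mem g
  nrm_congr : ∀ {f g : Ω → ℝ}, f =ᵐ[μ] g → nrm f = nrm g
  mem_meas : ∀ {f : Ω → ℝ}, Mem f → AEStronglyMeasurable f μ
  zero_mem : Mem 0
  add_mem : ∀ {f g : Ω → ℝ}, Mem f → Mem g → Mem (f + g)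
  smul_mem : ∀ (c : ℝ) {f : Ω → ℝ}, Mem f → Mem (c • f)
  nrm_nonneg : ∀ f : Ω → ℝ, 0 ≤ nrm f
  nrm_eq_zero_iff : ∀ {f : Ω → ℝ}, Mem f → (nrm f = 0 ↔ f =ᵐ[μ] 0)
  nrm_smul : ∀ (c : ℝ) {f : Ω → ℝ}, Mem f → nrm (c • f) = |c| * nrm f
  K : ℝ
  one_le_K : 1 ≤ K
  nrm_add_le : ∀ {f g : Ω → ℝ}, Mem f → Mem g → nrm (f + g) ≤ K * (nrm f + nrm g)
  ideal_mem : ∀ {f g : Ω → ℝ}, Mem f → AEStronglyMeasurable g μ →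
    (∀ᵐ ω ∂μ, |g ω| ≤ |f ω|) → Mem g
  ideal_nrm : ∀ {f g : Ω → ℝ}, Mem f → Mem g → (∀ᵐ ω ∂μ, |g ω| ≤ |f ω|) → nrm g ≤ nrm f
  complete : ∀ F : ℕ → Ω → ℝ, (∀ n, Mem (F n)) →
    (∀ ε : ℝ, 0 < ε → ∃ N : ℕ, ∀ m ≥ N, ∀ n ≥ N, nrm (F m - F n) < ε) →
    ∃ f : Ω → ℝ, Mem f ∧ Tendsto (fun n => nrm (f - F n)) atTop (𝓝 0)

/-- σ-order continuity: if `fₙ ↓ 0` μ-a.e. then `‖fₙ‖ → 0`. -/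
def SigmaOC (μ : Measure Ω) (Mem : (Ω → ℝ) → Prop) (nrm : (Ω → ℝ) → ℝ) : Prop :=
  ∀ F : ℕ → Ω → ℝ, (∀ n, Mem (F n)) →
    (∀ᵐ ω ∂μ, Antitone fun n => F n ω) →
    (∀ᵐ ω ∂μ, Tendsto (fun n => F n ω) atTop (𝓝 0)) →
    Tendsto (fun n => nrm (F n)) atTop (𝓝 0)

/-- `q`-concavity of a space given by membership predicate `Mem` and quasi-norm `nrm`. -/
def SpaceQConcave (Mem : (Ω → ℝ) → Prop) (nrm : (Ω → ℝ) → ℝ) (q : ℝ) : Prop :=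
  ∃ C : ℝ, 0 < C ∧ ∀ (n : ℕ) (f : Fin n → Ω → ℝ), (∀ j, Mem (f j)) →
    (∑ j, nrm (f j) ^ q) ^ (1 / q) ≤
      C * nrm (fun ω => (∑ j, |f j ω| ^ q) ^ (1 / q))

/-- The set of values `(∑‖g_j‖^q)^{1/q}` over all finite `q`-decompositions of `|f|`. -/
def coreSet (μ : Measure Ω) (Mem : (Ω → ℝ) → Prop) (nrm : (Ω → ℝ) → ℝ) (q : ℝ)
    (f : Ω → ℝ) : Set ℝ :=
  {a : ℝ | ∃ (n : ℕ) (g : Fin n → Ω → ℝ), (∀ j, Mem (g j)) ∧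
    (∀ᵐ ω ∂μ, |f ω| = (∑ j, |g j ω| ^ q) ^ (1 / q)) ∧
    a = (∑ j, nrm (g j) ^ q) ^ (1 / q)}

/-- Membership in `qX(μ)`, the `q`-concave core. -/
def coreMem (μ : Measure Ω) (Mem : (Ω → ℝ) → Prop) (nrm : (Ω → ℝ) → ℝ) (q : ℝ)
    (f : Ω → ℝ) : Prop :=
  Mem f ∧ BddAbove (coreSet μ Mem nrm q f)

/-- The quasi-norm of `qX(μ)`. -/
noncomputable def coreNrm (μ : Measure Ω) (Mem : (Ω → ℝ) → Prop) (nrm : (Ω → ℝ) → ℝ)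
    (q : ℝ) (f : Ω → ℝ) : ℝ :=
  sSup (coreSet μ Mem nrm q f)


private lemma rpow_q_inv {q : ℝ} (hq : 0 < q) {x : ℝ} (hx : 0 ≤ x) :
    (x ^ q) ^ (1 / q) = x := by
  rw [← Real.rpow_mul hx, mul_one_div_cancel hq.ne', Real.rpow_one]

private lemma rpow_inv_q {q : ℝ} (hq : 0 < q) {x : ℝ} (hx : 0 ≤ x) :
    (x ^ (1 / q)) ^ q = x := by
  rw [← Real.rpow_mul hx, one_div_mul_cancel hq.ne', Real.rpow_one]

private lemma QBFS.nrm_zero {μ : Measure Ω} (Z : QBFS μ) : Z.nrm 0 = 0 :=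
  (Z.nrm_eq_zero_iff Z.zero_mem).mpr (Filter.EventuallyEq.rfl)

private lemma QBFS.finset_sum_mem {μ : Measure Ω} (Z : QBFS μ) {ι : Type*} (s : Finset ι)
    (F : ι → Ω → ℝ) (h : ∀ i ∈ s, Z.Mem (F i)) : Z.Mem (fun ω => ∑ i ∈ s, F i ω) := by
  classical
  induction s using Finset.cons_induction with
  | empty => simp only [Finset.sum_empty]; exact Z.zero_mem
  | cons a s ha ih =>
    simp only [Finset.sum_cons]
    exact Z.add_mem (h a (Finset.mem_cons_self _ _))
      (ih fun i hi => h i (Finset.mem_cons_of_mem hi))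

private lemma QBFS.nrm_range_sum_le {μ : Measure Ω} (Z : QBFS μ) :
    ∀ (k : ℕ) (F : ℕ → Ω → ℝ), (∀ i, Z.Mem (F i)) →
      Z.nrm (fun ω => ∑ i ∈ Finset.range k, F i ω) ≤
        ∑ i ∈ Finset.range k, Z.K ^ (i + 1) * Z.nrm (F i) := by
  intro k
  have hK0 : (0 : ℝ) ≤ Z.K := by linarith [Z.one_le_K]
  induction k with
  | zero =>
    intro F hF
    simp only [Finset.sum_range_zero]; exact le_of_eq Z.nrm_zero
  | succ k ih =>
    intro F hF
    have h1 : (fun ω => ∑ i ∈ Finset.range (k + 1), F i ω)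
        = F 0 + fun ω => ∑ i ∈ Finset.range k, F (i + 1) ω := by
      funext ω
      simp only [Finset.sum_range_succ', Pi.add_apply]
      ring
    have hmem : Z.Mem (fun ω => ∑ i ∈ Finset.range k, F (i + 1) ω) :=
      Z.finset_sum_mem _ _ fun i _ => hF _
    have hih := ih (fun i => F (i + 1)) fun i => hF _
    calc Z.nrm (fun ω => ∑ i ∈ Finset.range (k + 1), F i ω)
        = Z.nrm (F 0 + fun ω => ∑ i ∈ Finset.range k, F (i + 1) ω) := by rw [h1]
      _ ≤ Z.K * (Z.nrm (F 0) + Z.nrm (fun ω => ∑ i ∈ Finset.range k, F (i + 1) ω)) :=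
          Z.nrm_add_le (hF 0) hmem
      _ ≤ Z.K * (Z.nrm (F 0) + ∑ i ∈ Finset.range k, Z.K ^ (i + 1) * Z.nrm (F (i + 1))) := by
          apply mul_le_mul_of_nonneg_left _ hK0
          linarith
      _ = Z.K * Z.nrm (F 0)
            + ∑ i ∈ Finset.range k, Z.K * (Z.K ^ (i + 1) * Z.nrm (F (i + 1))) := by
          rw [mul_add, Finset.mul_sum]
      _ = ∑ i ∈ Finset.range (k + 1), Z.K ^ (i + 1) * Z.nrm (F i) := by
          rw [Finset.sum_range_succ', pow_one, add_comm]
          congr 1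
          refine Finset.sum_congr rfl fun i _ => ?_
          ring

/-- For a quasi-B.f.s. `Z(ξ)` with `μ ≪ ξ`, the natural map `[i] : Z(ξ) → X(μ)` is well
defined and `q`-concave iff the natural map `[i] : Z(ξ) → qX(μ)` is well defined. -/
theorem core_universal_property (μ ξ : Measure Ω) (hac : μ ≪ ξ)
    (X : QBFS μ) (hoc : SigmaOC μ X.Mem X.nrm) (q : ℝ) (hq : 0 < q) (Z : QBFS ξ) :
    ((∀ f : Ω → ℝ, Z.Mem f → X.Mem f) ∧
      ∃ C : ℝ, 0 < C ∧ ∀ (n : ℕ) (f : Fin n → Ω → ℝ), (∀ j, Z.Mem (f j)) →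
        (∑ j, X.nrm (f j) ^ q) ^ (1 / q) ≤
          C * Z.nrm (fun ω => (∑ j, |f j ω| ^ q) ^ (1 / q))) ↔
    (∀ f : Ω → ℝ, Z.Mem f → coreMem μ X.Mem X.nrm q f) := by
  constructor
  · rintro ⟨hincl, C, hC, hconc⟩ f hf
    refine ⟨hincl f hf, C * Z.nrm f, ?_⟩
    rintro a ⟨n, g, hg, hdec, rfl⟩
    have hfZ : AEStronglyMeasurable f ξ := Z.mem_meas hf
    set f' : Ω → ℝ := hfZ.mk f with hf'def
    have hff' : f =ᵐ[ξ] f' := hfZ.ae_eq_mk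
    have hf'm : Measurable f' := hfZ.stronglyMeasurable_mk.measurable
    have hgm : ∀ j, AEStronglyMeasurable (g j) μ := fun j => X.mem_meas (hg j)
    set h : Fin n → Ω → ℝ := fun j => (hgm j).mk (g j) with hdef
    have hgh : ∀ j, g j =ᵐ[μ] h j := fun j => (hgm j).ae_eq_mk
    have hhm : ∀ j, Measurable (h j) := fun j => (hgm j).stronglyMeasurable_mk.measurable
    set S : Ω → ℝ := fun ω => (∑ j, |h j ω| ^ q) ^ (1 / q) with hSdef
    have hSm : Measurable S :=
      (Finset.measurable_sum _ fun j _ => ((hhm j).abs).pow measurable_const).pow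
        measurable_const
    set A : Set Ω := (fun ω => S ω - |f' ω|) ⁻¹' {0} with hAdef
    have hA : MeasurableSet A := (hSm.sub hf'm.abs) (measurableSet_singleton 0)
    have hAiff : ∀ ω, ω ∈ A ↔ S ω = |f' ω| := by
      intro ω
      simp [hAdef, sub_eq_zero]
    set k : Fin n → Ω → ℝ := fun j => A.indicator (h j) with hkdef
    have hkm : ∀ j, Measurable (k j) := fun j => (hhm j).indicator hA
    -- a.e. facts
    have haeA : ∀ᵐ ω ∂μ, ω ∈ A := by
      filter_upwards [hdec, ae_all_iff.mpr hgh, hff'.filter_mono hac.ae_le] with ω h1 h2 h3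
      rw [hAiff]
      rw [hSdef]
      simp only
      rw [← h3, h1]
      congr 1
      exact Finset.sum_congr rfl fun j _ => by rw [h2 j]
    have hkg : ∀ j, k j =ᵐ[μ] g j := by
      intro j
      filter_upwards [haeA, hgh j] with ω h1 h2
      rw [hkdef]
      simp only [Set.indicator_of_mem h1, h2]
    -- pointwise domination
    have hkle : ∀ j ω, |k j ω| ≤ |f' ω| := by
      intro j ω
      rw [hkdef]
      simp only
      by_cases hω : ω ∈ A
      · rw [Set.indicator_of_mem hω]
        have h1 : |h j ω| = (|h j ω| ^ q) ^ (1 / q) := (rpow_q_inv hq (abs_nonneg _)).symm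
        rw [h1, ← (hAiff ω).mp hω, hSdef]
        exact Real.rpow_le_rpow (Real.rpow_nonneg (abs_nonneg _) _)
          (Finset.single_le_sum (f := fun i : Fin n => |h i ω| ^ q)
            (fun i _ => Real.rpow_nonneg (abs_nonneg _) _)
            (Finset.mem_univ j)) (by positivity)
      · rw [Set.indicator_of_notMem hω]
        simp [abs_nonneg]
    have hkZ : ∀ j, Z.Mem (k j) := fun j =>
      Z.ideal_mem (Z.mem_congr hf hff') (hkm j).aestronglyMeasurable
        (Eventually.of_forall (hkle j))
    -- the aggregate of k
    have hTle : ∀ ω, |(∑ j, |k j ω| ^ q) ^ (1 / q)| ≤ |f' ω| := by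
      intro ω
      rw [abs_of_nonneg (Real.rpow_nonneg
        (Finset.sum_nonneg fun j _ => Real.rpow_nonneg (abs_nonneg _) _) _)]
      by_cases hω : ω ∈ A
      · have h1 : ∀ j : Fin n, |k j ω| = |h j ω| := fun j => by
          rw [hkdef]; simp [Set.indicator_of_mem hω]
        have h2 : (∑ j, |k j ω| ^ q) ^ (1 / q) = S ω := by
          rw [hSdef]
          simp only
          congr 1
          exact Finset.sum_congr rfl fun j _ => by rw [h1 j]
        rw [h2, (hAiff ω).mp hω]
      · have h1 : ∀ j : Fin n, |k j ω| = 0 := fun j => by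
          rw [hkdef]; simp [Set.indicator_of_notMem hω]
        have h2 : (∑ j, |k j ω| ^ q) ^ (1 / q) = 0 := by
          rw [Finset.sum_eq_zero fun j _ => by rw [h1 j, Real.zero_rpow hq.ne']]
          exact Real.zero_rpow (by positivity)
        rw [h2]
        exact abs_nonneg _
    have hTmeas : Measurable fun ω => (∑ j, |k j ω| ^ q) ^ (1 / q) :=
      (Finset.measurable_sum _ fun j _ => ((hkm j).abs).pow measurable_const).pow
        measurable_const
    have hTZ : Z.Mem fun ω => (∑ j, |k j ω| ^ q) ^ (1 / q) :=
      Z.ideal_mem (Z.mem_congr hf hff') hTmeas.aestronglyMeasurable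
        (Eventually.of_forall hTle)
    have hTnrm : Z.nrm (fun ω => (∑ j, |k j ω| ^ q) ^ (1 / q)) ≤ Z.nrm f := by
      rw [Z.nrm_congr hff']
      exact Z.ideal_nrm (Z.mem_congr hf hff') hTZ (Eventually.of_forall hTle)
    have hmain := hconc n k hkZ
    have hkn : ∀ j, X.nrm (k j) = X.nrm (g j) := fun j => X.nrm_congr (hkg j)
    calc (∑ j, X.nrm (g j) ^ q) ^ (1 / q)
        = (∑ j, X.nrm (k j) ^ q) ^ (1 / q) := by
          congr 1
          exact Finset.sum_congr rfl fun j _ => by rw [hkn j]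
      _ ≤ C * Z.nrm (fun ω => (∑ j, |k j ω| ^ q) ^ (1 / q)) := hmain
      _ ≤ C * Z.nrm f := mul_le_mul_of_nonneg_left hTnrm hC.le
  · intro H
    refine ⟨fun f hf => (H f hf).1, ?_⟩
    by_contra hcon
    push_neg at hcon
    set KK : ℝ := 2 * Z.K with hKKdef
    have hK1 : 1 ≤ Z.K := Z.one_le_K
    have hKK2 : (2 : ℝ) ≤ KK := by rw [hKKdef]; linarith
    have hKKpos : (0 : ℝ) < KK := by linarith
    -- choose bad families
    have hsel : ∀ m : ℕ, ∃ (n : ℕ) (f : Fin n → Ω → ℝ), (∀ j, Z.Mem (f j)) ∧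
        ((m : ℝ) + 1) * KK ^ m * Z.nrm (fun ω => (∑ j, |f j ω| ^ q) ^ (1 / q)) <
          (∑ j, X.nrm (f j) ^ q) ^ (1 / q) := by
      intro m
      obtain ⟨n, f, hZf, hlt⟩ := hcon (((m : ℝ) + 1) * KK ^ m) (by positivity)
      exact ⟨n, f, hZf, hlt⟩
    choose nn ff hZff hlt using hsel
    -- measurable representatives
    have hffm : ∀ m j, AEStronglyMeasurable (ff m j) ξ := fun m j => Z.mem_meas (hZff m j)
    set g : ∀ m, Fin (nn m) → Ω → ℝ := fun m j => (hffm m j).mk _ with hgdef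
    have hfg : ∀ m j, ff m j =ᵐ[ξ] g m j := fun m j => (hffm m j).ae_eq_mk
    have hgmeas : ∀ m j, Measurable (g m j) := fun m j =>
      (hffm m j).stronglyMeasurable_mk.measurable
    have hZg : ∀ m j, Z.Mem (g m j) := fun m j => Z.mem_congr (hZff m j) (hfg m j)
    set u : ℕ → Ω → ℝ := fun m ω => (∑ j, |g m j ω| ^ q) ^ (1 / q) with hudef
    have humeas : ∀ m, Measurable (u m) := fun m =>
      (Finset.measurable_sum _ fun j _ => ((hgmeas m j).abs).pow measurable_const).pow
        measurable_const
    have hunn : ∀ m ω, 0 ≤ u m ω := fun m ω =>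
      Real.rpow_nonneg (Finset.sum_nonneg fun j _ => Real.rpow_nonneg (abs_nonneg _) _) _
    -- u m belongs to Z
    have habs : ∀ m j, Z.Mem fun ω => |g m j ω| := fun m j =>
      Z.ideal_mem (hZg m j) ((hgmeas m j).abs).aestronglyMeasurable
        (Eventually.of_forall fun ω => by simp)
    have hvmem : ∀ m, Z.Mem fun ω => ∑ j, |g m j ω| := fun m =>
      Z.finset_sum_mem _ _ fun j _ => habs m j
    have huZ : ∀ m, Z.Mem (u m) := by
      intro m
      refine Z.ideal_mem (Z.smul_mem ((nn m : ℝ) ^ (1 / q)) (hvmem m))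
        (humeas m).aestronglyMeasurable (Eventually.of_forall fun ω => ?_)
      have hVnn : 0 ≤ ∑ j, |g m j ω| := Finset.sum_nonneg fun j _ => abs_nonneg _
      have h1 : ∀ j : Fin (nn m), |g m j ω| ^ q ≤ (∑ i, |g m i ω|) ^ q := fun j =>
        Real.rpow_le_rpow (abs_nonneg _)
          (Finset.single_le_sum (f := fun i : Fin (nn m) => |g m i ω|)
            (fun i _ => abs_nonneg _) (Finset.mem_univ j)) hq.le
      have h2 : ∑ j, |g m j ω| ^ q ≤ (nn m : ℝ) * (∑ j, |g m j ω|) ^ q := by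
        calc ∑ j, |g m j ω| ^ q ≤ ∑ _j : Fin (nn m), (∑ i, |g m i ω|) ^ q :=
              Finset.sum_le_sum fun j _ => h1 j
          _ = (nn m : ℝ) * (∑ j, |g m j ω|) ^ q := by
              rw [Finset.sum_const, Finset.card_univ, Fintype.card_fin, nsmul_eq_mul]
      have h3 : u m ω ≤ (nn m : ℝ) ^ (1 / q) * ∑ j, |g m j ω| := by
        calc u m ω ≤ ((nn m : ℝ) * (∑ j, |g m j ω|) ^ q) ^ (1 / q) :=
              Real.rpow_le_rpow
                (Finset.sum_nonneg fun j _ => Real.rpow_nonneg (abs_nonneg _) _) h2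
                (by positivity)
          _ = (nn m : ℝ) ^ (1 / q) * ∑ j, |g m j ω| := by
              rw [Real.mul_rpow (Nat.cast_nonneg _) (Real.rpow_nonneg hVnn _),
                rpow_q_inv hq hVnn]
      rw [abs_of_nonneg (hunn m ω)]
      refine h3.trans (le_abs_self _)
    -- the norms b m are positive
    have hbZ : ∀ m, Z.nrm (fun ω => (∑ j, |ff m j ω| ^ q) ^ (1 / q)) = Z.nrm (u m) := by
      intro m
      refine Z.nrm_congr ?_
      filter_upwards [ae_all_iff.mpr (hfg m)] with ω hω
      simp only [hudef]
      congr 1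
      exact Finset.sum_congr rfl fun j _ => by rw [hω j]
    set b : ℕ → ℝ := fun m => Z.nrm (u m) with hbdef
    have hbpos : ∀ m, 0 < b m := by
      intro m
      rcases lt_or_eq_of_le (Z.nrm_nonneg (u m)) with h | h
      · exact h
      have hu0 : u m =ᵐ[ξ] 0 := (Z.nrm_eq_zero_iff (huZ m)).mp h.symm
      have hg0 : ∀ j, g m j =ᵐ[ξ] 0 := by
        intro j
        filter_upwards [hu0] with ω hω
        have hsum0 : ∑ i, |g m i ω| ^ q = 0 := by
          have := (Real.rpow_eq_zero
            (Finset.sum_nonneg fun i _ => Real.rpow_nonneg (abs_nonneg _) _)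
            (by positivity : (1 : ℝ) / q ≠ 0)).mp hω
          exact this
        have := (Finset.sum_eq_zero_iff_of_nonneg
          (fun i _ => Real.rpow_nonneg (abs_nonneg _) q)).mp hsum0 j (Finset.mem_univ j)
        have habs0 : |g m j ω| = 0 := (Real.rpow_eq_zero (abs_nonneg _) hq.ne').mp this
        simpa using habs0
      have hffn : ∀ j, X.nrm (ff m j) = 0 := by
        intro j
        have heq : ff m j =ᵐ[μ] 0 :=
          ((hfg m j).trans (hg0 j)).filter_mono hac.ae_le
        rw [X.nrm_congr heq, X.nrm_zero]
      have hlt' := hlt m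
      rw [hbZ m] at hlt'
      have hzero : (∑ j, X.nrm (ff m j) ^ q) ^ (1 / q) = 0 := by
        rw [Finset.sum_eq_zero fun j _ => by rw [hffn j, Real.zero_rpow hq.ne']]
        exact Real.zero_rpow (by positivity)
      rw [hzero, ← h] at hlt'
      simp at hlt'
    set c : ℕ → ℝ := fun m => (KK ^ m * b m)⁻¹ with hcdef
    have hcpos : ∀ m, 0 < c m := fun m =>
      inv_pos.mpr (mul_pos (pow_pos hKKpos m) (hbpos m))
    set t : ℕ → Ω → ℝ := fun m => c m • u m with htdef
    have htZ : ∀ m, Z.Mem (t m) := fun m => Z.smul_mem _ (huZ m)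
    have htnn : ∀ m ω, 0 ≤ t m ω := fun m ω => by
      simp only [htdef, Pi.smul_apply, smul_eq_mul]
      exact mul_nonneg (hcpos m).le (hunn m ω)
    have htnrm : ∀ m, Z.nrm (t m) = KK⁻¹ ^ m := by
      intro m
      have hbne : Z.nrm (u m) ≠ 0 := (hbpos m).ne'
      rw [Z.nrm_smul _ (huZ m), abs_of_pos (hcpos m)]
      show (KK ^ m * Z.nrm (u m))⁻¹ * Z.nrm (u m) = KK⁻¹ ^ m
      rw [mul_inv, mul_assoc, inv_mul_cancel₀ hbne, mul_one, inv_pow]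
    set S : ℕ → Ω → ℝ := fun N ω => ∑ m ∈ Finset.range N, t m ω with hSdef
    have hSZ : ∀ N, Z.Mem (S N) := fun N => Z.finset_sum_mem _ _ fun i _ => htZ i
    have hSmono : ∀ M N, M ≤ N → ∀ ω, S M ω ≤ S N ω := fun M N hMN ω =>
      Finset.sum_le_sum_of_subset_of_nonneg (Finset.range_subset_range.mpr hMN)
        fun i _ _ => htnn i ω
    -- Cauchy estimate
    have hhalf : ∀ k : ℕ, ∑ i ∈ Finset.range k, (2⁻¹ : ℝ) ^ i ≤ 2 := by
      intro k
      rw [geom_sum_eq (by norm_num)]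
      have hp : (0 : ℝ) ≤ (2⁻¹ : ℝ) ^ k := by positivity
      rw [div_le_iff_of_neg (by norm_num)]
      linarith
    have hKinv : (0 : ℝ) ≤ KK⁻¹ := by positivity
    have hKinv1 : KK⁻¹ < 1 := inv_lt_one_of_one_lt₀ (by linarith)
    have hcb : ∀ m n : ℕ, m ≤ n → Z.nrm (S n - S m) ≤ KK * KK⁻¹ ^ m := by
      intro m n hmn
      have hrepr : S n - S m = fun ω => ∑ i ∈ Finset.range (n - m), t (m + i) ω := by
        funext ω
        have h4 : ∑ x ∈ Finset.range (m + (n - m)), t x ω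
            = ∑ x ∈ Finset.range m, t x ω + ∑ x ∈ Finset.range (n - m), t (m + x) ω :=
          Finset.sum_range_add _ _ _
        rw [Nat.add_sub_cancel' hmn] at h4
        simp only [Pi.sub_apply, hSdef]
        rw [h4]
        ring
      rw [hrepr]
      have hKpos : (0 : ℝ) < Z.K := by linarith
      have hterm : ∀ i : ℕ, Z.K ^ (i + 1) * Z.nrm (t (m + i))
          = Z.K * KK⁻¹ ^ m * (2⁻¹ : ℝ) ^ i := by
        intro i
        rw [htnrm]
        have h12 : Z.K * KK⁻¹ = 2⁻¹ := by
          rw [hKKdef]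
          field_simp
        calc Z.K ^ (i + 1) * KK⁻¹ ^ (m + i)
            = Z.K * KK⁻¹ ^ m * (Z.K * KK⁻¹) ^ i := by
              rw [pow_add, pow_succ, mul_pow]; ring
          _ = Z.K * KK⁻¹ ^ m * (2⁻¹ : ℝ) ^ i := by rw [h12]
      calc Z.nrm (fun ω => ∑ i ∈ Finset.range (n - m), t (m + i) ω)
          ≤ ∑ i ∈ Finset.range (n - m), Z.K ^ (i + 1) * Z.nrm (t (m + i)) :=
            Z.nrm_range_sum_le _ _ fun i => htZ _
        _ = Z.K * KK⁻¹ ^ m * ∑ i ∈ Finset.range (n - m), (2⁻¹ : ℝ) ^ i := by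
            rw [Finset.mul_sum]
            exact Finset.sum_congr rfl fun i _ => hterm i
        _ ≤ Z.K * KK⁻¹ ^ m * 2 := by
            refine mul_le_mul_of_nonneg_left (hhalf _) ?_
            positivity
        _ = KK * KK⁻¹ ^ m := by rw [hKKdef]; ring
    have hSdiffZ : ∀ m n : ℕ, Z.Mem (S m - S n) := by
      intro m n
      have heq : S m - S n = S m + (-1 : ℝ) • S n := by
        funext ω; simp [sub_eq_add_neg]
      rw [heq]
      exact Z.add_mem (hSZ m) (Z.smul_mem _ (hSZ n))
    have hcauchy : ∀ ε : ℝ, 0 < ε → ∃ N : ℕ, ∀ m ≥ N, ∀ n ≥ N, Z.nrm (S m - S n) < ε := by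
      intro ε hε
      have hlim : Tendsto (fun N : ℕ => KK * KK⁻¹ ^ N) atTop (𝓝 0) := by
        have h0 := (tendsto_pow_atTop_nhds_zero_of_lt_one hKinv hKinv1).const_mul KK
        simpa using h0
      obtain ⟨N, hN⟩ := (hlim.eventually (gt_mem_nhds hε)).exists_forall_of_atTop
      refine ⟨N, fun m hm n hn => ?_⟩
      have hmono : ∀ p : ℕ, N ≤ p → KK * KK⁻¹ ^ p ≤ KK * KK⁻¹ ^ N := fun p hp =>
        mul_le_mul_of_nonneg_left (pow_le_pow_of_le_one hKinv hKinv1.le hp) hKKpos.le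
      rcases le_total n m with hnm | hmn
      · calc Z.nrm (S m - S n) ≤ KK * KK⁻¹ ^ n := hcb n m hnm
          _ ≤ KK * KK⁻¹ ^ N := hmono n hn
          _ < ε := hN N le_rfl
      · have heq : S m - S n = (-1 : ℝ) • (S n - S m) := by
          funext ω; simp
        rw [heq, Z.nrm_smul _ (hSdiffZ n m)]
        calc |(-1 : ℝ)| * Z.nrm (S n - S m) = Z.nrm (S n - S m) := by simp
          _ ≤ KK * KK⁻¹ ^ m := hcb m n hmn
          _ ≤ KK * KK⁻¹ ^ N := hmono m hm
          _ < ε := hN N le_rfl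
    obtain ⟨F, hFZ, hFtend⟩ := Z.complete S hSZ hcauchy
    -- S M ≤ F a.e.
    have hFS : ∀ N, Z.Mem (F - S N) := by
      intro N
      have heq : F - S N = F + (-1 : ℝ) • S N := by
        funext ω; simp [sub_eq_add_neg]
      rw [heq]
      exact Z.add_mem hFZ (Z.smul_mem _ (hSZ N))
    have hSleF : ∀ M, ∀ᵐ ω ∂ξ, S M ω ≤ F ω := by
      intro M
      set gM : Ω → ℝ := fun ω => max (S M ω - F ω) 0 with hgMdef
      have hgMnn : ∀ ω, 0 ≤ gM ω := fun ω => le_max_right _ _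
      have hgMle : ∀ N, M ≤ N → ∀ ω, |gM ω| ≤ |(F - S N) ω| := by
        intro N hMN ω
        rw [abs_of_nonneg (hgMnn ω)]
        refine max_le ?_ (abs_nonneg _)
        calc S M ω - F ω ≤ S N ω - F ω := by
              have := hSmono M N hMN ω; linarith
          _ ≤ |S N ω - F ω| := le_abs_self _
          _ = |(F - S N) ω| := by rw [Pi.sub_apply, abs_sub_comm]
      have hgMmem : Z.Mem gM := by
        refine Z.ideal_mem (hFS M) ?_ (Eventually.of_forall (hgMle M le_rfl))
        exact (((Z.mem_meas (hSZ M)).aemeasurable.sub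
          (Z.mem_meas hFZ).aemeasurable).max aemeasurable_const).aestronglyMeasurable
      have hnrm_le : ∀ N ≥ M, Z.nrm gM ≤ Z.nrm (F - S N) := fun N hN =>
        Z.ideal_nrm (hFS N) hgMmem (Eventually.of_forall (hgMle N hN))
      have hle0 : Z.nrm gM ≤ 0 :=
        ge_of_tendsto hFtend (eventually_atTop.mpr ⟨M, hnrm_le⟩)
      have h0 : Z.nrm gM = 0 := le_antisymm hle0 (Z.nrm_nonneg _)
      filter_upwards [(Z.nrm_eq_zero_iff hgMmem).mp h0] with ω hω
      have h1 : gM ω = 0 := hω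
      have h2 : S M ω - F ω ≤ gM ω := le_max_left _ _
      linarith [h2.trans_eq h1]
    have hae_main : ∀ᵐ ω ∂μ, ∀ M, S M ω ≤ F ω :=
      (ae_all_iff.mpr hSleF).filter_mono hac.ae_le
    -- final contradiction
    obtain ⟨hFX, hbddF⟩ := H F hFZ
    obtain ⟨B, hB⟩ := hbddF
    obtain ⟨M, hM⟩ := exists_nat_gt B
    set n := nn M with hndef
    set cc : ℝ := c M with hccdef
    have hccpos : 0 < cc := hcpos M
    set d : Ω → ℝ := fun ω => ∑ j : Fin n, |cc * g M j ω| ^ q with hddef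
    set h : Ω → ℝ := fun ω => max (|F ω| ^ q - d ω) 0 ^ (1 / q) with hhdef
    have hdnn : ∀ ω, 0 ≤ d ω := fun ω =>
      Finset.sum_nonneg fun j _ => Real.rpow_nonneg (abs_nonneg _) _
    have hXg : ∀ j : Fin n, X.Mem (cc • g M j) := fun j =>
      X.smul_mem _ (H _ (hZg M j)).1
    have hFXm : AEStronglyMeasurable F μ := X.mem_meas hFX
    have hdm : Measurable d :=
      Finset.measurable_sum _ fun j _ =>
        ((measurable_const.mul (hgmeas M j)).abs).pow measurable_const
    have hhm : AEMeasurable h μ :=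
      ((((measurable_abs.comp_aemeasurable hFXm.aemeasurable).pow
        aemeasurable_const).sub hdm.aemeasurable).max aemeasurable_const).pow
        aemeasurable_const
    have hhnn : ∀ ω, 0 ≤ h ω := fun ω => Real.rpow_nonneg (le_max_right _ _) _
    have hhle : ∀ ω, |h ω| ≤ |F ω| := by
      intro ω
      rw [abs_of_nonneg (hhnn ω), hhdef]
      calc max (|F ω| ^ q - d ω) 0 ^ (1 / q)
          ≤ (|F ω| ^ q) ^ (1 / q) :=
            Real.rpow_le_rpow (le_max_right _ _)
              (max_le (sub_le_self _ (hdnn ω)) (Real.rpow_nonneg (abs_nonneg _) _))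
              (by positivity)
        _ = |F ω| := rpow_q_inv hq (abs_nonneg _)
    have hXh : X.Mem h :=
      X.ideal_mem hFX hhm.aestronglyMeasurable (Eventually.of_forall hhle)
    set G : Fin (n + 1) → Ω → ℝ := Fin.snoc (fun j => cc • g M j) h with hGdef
    have hXG : ∀ j, X.Mem (G j) := by
      intro j
      refine Fin.lastCases ?_ ?_ j
      · simp only [hGdef, Fin.snoc_last]
        exact hXh
      · intro i
        simp only [hGdef, Fin.snoc_castSucc]
        exact hXg i
    -- the decomposition property
    have hdecF : ∀ᵐ ω ∂μ, |F ω| = (∑ j : Fin (n + 1), |G j ω| ^ q) ^ (1 / q) := by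
      filter_upwards [hae_main] with ω hω
      have hF0 : 0 ≤ F ω := by
        have h0 := hω 0
        simpa [hSdef] using h0
      have htM : cc * u M ω ≤ F ω := by
        have h1 : t M ω ≤ S (M + 1) ω := by
          rw [hSdef]
          exact Finset.single_le_sum (f := fun i : ℕ => t i ω)
            (fun i _ => htnn i ω) (Finset.self_mem_range_succ M)
        have h2 := hω (M + 1)
        have h3 : t M ω = cc * u M ω := by
          simp [htdef, hccdef]
        linarith
      have hcuq : (cc * u M ω) ^ q = d ω := by
        have huq : u M ω ^ q = ∑ j, |g M j ω| ^ q :=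
          rpow_inv_q hq
            (Finset.sum_nonneg fun j _ => Real.rpow_nonneg (abs_nonneg _) _)
        rw [Real.mul_rpow hccpos.le (hunn M ω), huq, Finset.mul_sum]
        show _ = ∑ j : Fin n, |cc * g M j ω| ^ q
        refine Finset.sum_congr rfl fun j _ => ?_
        rw [abs_mul, Real.mul_rpow (abs_nonneg _) (abs_nonneg _), abs_of_pos hccpos]
      have hd_le : d ω ≤ |F ω| ^ q := by
        rw [← hcuq, abs_of_nonneg hF0]
        exact Real.rpow_le_rpow (mul_nonneg hccpos.le (hunn M ω)) htM hq.le
      have hh_q : h ω ^ q = |F ω| ^ q - d ω := by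
        show (max (|F ω| ^ q - d ω) 0 ^ (1 / q)) ^ q = _
        rw [rpow_inv_q hq (le_max_right _ _), max_eq_left (by linarith)]
      have hsum : ∑ j : Fin (n + 1), |G j ω| ^ q = |F ω| ^ q := by
        rw [Fin.sum_univ_castSucc]
        have hGc : ∀ j : Fin n, |G j.castSucc ω| ^ q = |cc * g M j ω| ^ q := fun j => by
          simp [hGdef, Fin.snoc_castSucc]
        have hGl : |G (Fin.last n) ω| ^ q = h ω ^ q := by
          rw [hGdef]
          simp [Fin.snoc_last, abs_of_nonneg (hhnn ω)]
        rw [hGl, hh_q]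
        have hsum2 : ∑ j : Fin n, |G j.castSucc ω| ^ q = d ω := by
          show _ = ∑ j : Fin n, |cc * g M j ω| ^ q
          exact Finset.sum_congr rfl fun j _ => hGc j
        rw [hsum2]
        ring
      rw [hsum, rpow_q_inv hq (abs_nonneg _)]
    -- the value is large
    have hval : ((∑ j : Fin (n + 1), X.nrm (G j) ^ q) ^ (1 / q)) ∈
        coreSet μ X.Mem X.nrm q F := ⟨n + 1, G, hXG, hdecF, rfl⟩
    have haB : (∑ j : Fin (n + 1), X.nrm (G j) ^ q) ^ (1 / q) ≤ B := hB hval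
    have hnrmG : ∀ j : Fin n, X.nrm (G j.castSucc) = cc * X.nrm (g M j) := by
      intro j
      have h1 : G j.castSucc = cc • g M j := by
        rw [hGdef]; exact Fin.snoc_castSucc _ _ _
      rw [h1, X.nrm_smul _ (H _ (hZg M j)).1, abs_of_pos hccpos]
    have hnrmfg : ∀ j : Fin n, X.nrm (ff M j) = X.nrm (g M j) := fun j =>
      X.nrm_congr ((hfg M j).filter_mono hac.ae_le)
    have hage : cc * (∑ j : Fin n, X.nrm (ff M j) ^ q) ^ (1 / q)
        ≤ (∑ j : Fin (n + 1), X.nrm (G j) ^ q) ^ (1 / q) := by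
      have h1 : cc * (∑ j : Fin n, X.nrm (ff M j) ^ q) ^ (1 / q)
          = (∑ j : Fin n, X.nrm (G j.castSucc) ^ q) ^ (1 / q) := by
        have h2 : ∑ j : Fin n, X.nrm (G j.castSucc) ^ q
            = cc ^ q * ∑ j : Fin n, X.nrm (ff M j) ^ q := by
          rw [Finset.mul_sum]
          refine Finset.sum_congr rfl fun j _ => ?_
          rw [hnrmG j, hnrmfg j, Real.mul_rpow hccpos.le (X.nrm_nonneg _)]
        rw [h2, Real.mul_rpow (by positivity)
          (Finset.sum_nonneg fun j _ => Real.rpow_nonneg (X.nrm_nonneg _) _),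
          rpow_q_inv hq hccpos.le]
      rw [h1]
      refine Real.rpow_le_rpow
        (Finset.sum_nonneg fun j _ => Real.rpow_nonneg (X.nrm_nonneg _) _) ?_
        (by positivity)
      rw [Fin.sum_univ_castSucc]
      have : 0 ≤ X.nrm (G (Fin.last n)) ^ q := Real.rpow_nonneg (X.nrm_nonneg _) _
      linarith
    have hlt' := hlt M
    rw [hbZ M] at hlt'
    have hfinal : (M : ℝ) + 1 < cc * (∑ j : Fin n, X.nrm (ff M j) ^ q) ^ (1 / q) := by
      have h1 : cc * (((M : ℝ) + 1) * KK ^ M * b M)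
          < cc * (∑ j : Fin n, X.nrm (ff M j) ^ q) ^ (1 / q) :=
        mul_lt_mul_of_pos_left hlt' hccpos
      have h2 : cc * (((M : ℝ) + 1) * KK ^ M * b M) = (M : ℝ) + 1 := by
        show (KK ^ M * b M)⁻¹ * (((M : ℝ) + 1) * KK ^ M * b M) = (M : ℝ) + 1
        have h3 : KK ^ M * b M ≠ 0 := (mul_pos (pow_pos hKKpos M) (hbpos M)).ne'
        field_simp
        ring
        exact mul_inv_cancel₀ (hbpos M).ne'
      linarith
    have : (M : ℝ) + 1 < B := lt_of_lt_of_le (hfinal.trans_le hage) haB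
    linarith
end

section
/- Let X(μ) be a σ-order continuous quasi-Banach function space and q ∈ (0,∞). Then qX(μ) is the q-concave core of X(μ), i.e. the largest q-concave quasi-Banach function space over μ contained in X(μ): if Z(μ) is any q-concave quasi-Banach function space with Z(μ) ⊆ X(μ), then Z(μ) ⊆ qX(μ). In particular, qX(μ) = X(μ) whenever X(μ) is q-concave. -/
open MeasureTheory Filter Topology

variable {Ω : Type*} [MeasurableSpace Ω]

section Aux

variable {μ : Measure Ω}

namespace QBFS

lemma nrm_zero_s14 (X : QBFS μ) : X.nrm 0 = 0 := by
  have h := X.nrm_smul 0 X.zero_mem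
  simpa using h

lemma neg_mem (X : QBFS μ) {f : Ω → ℝ} (hf : X.Mem f) : X.Mem (-f) := by
  have := X.smul_mem (-1) hf
  rwa [neg_one_smul] at this

lemma sub_mem (X : QBFS μ) {f g : Ω → ℝ} (hf : X.Mem f) (hg : X.Mem g) :
    X.Mem (f - g) := by
  rw [sub_eq_add_neg]
  exact X.add_mem hf (X.neg_mem hg)

lemma nrm_neg (X : QBFS μ) {f : Ω → ℝ} (hf : X.Mem f) : X.nrm (-f) = X.nrm f := by
  have h := X.nrm_smul (-1) hf
  rwa [neg_one_smul, abs_neg, abs_one, one_mul] at h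

lemma aesm_abs {f : Ω → ℝ} (hf : AEStronglyMeasurable f μ) :
    AEStronglyMeasurable (fun ω => |f ω|) μ := by
  simpa [Real.norm_eq_abs] using hf.norm

lemma abs_mem (X : QBFS μ) {f : Ω → ℝ} (hf : X.Mem f) : X.Mem (fun ω => |f ω|) :=
  X.ideal_mem hf (aesm_abs (X.mem_meas hf))
    (Filter.Eventually.of_forall fun ω => by simp [abs_abs])

lemma nrm_abs (X : QBFS μ) {f : Ω → ℝ} (hf : X.Mem f) :
    X.nrm (fun ω => |f ω|) = X.nrm f := by
  refine le_antisymm ?_ ?_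
  · exact X.ideal_nrm hf (X.abs_mem hf)
      (Filter.Eventually.of_forall fun ω => by simp [abs_abs])
  · exact X.ideal_nrm (X.abs_mem hf) hf
      (Filter.Eventually.of_forall fun ω => by simp [abs_abs])

end QBFS

/-- Continuity of the inclusion `Z(μ) ⊆ X(μ)` between quasi-Banach function spaces,
when `X(μ)` is σ-order continuous. -/
lemma incl_cont (X Z : QBFS μ) (hoc : SigmaOC μ X.Mem X.nrm)
    (hsub : ∀ f : Ω → ℝ, Z.Mem f → X.Mem f) :
    ∃ M : ℝ, 0 < M ∧ ∀ g : Ω → ℝ, Z.Mem g → X.nrm g ≤ M * Z.nrm g := by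
  by_contra hcon
  push_neg at hcon
  classical
  set c : ℝ := 3 * Z.K with hc
  have hK1 : 1 ≤ Z.K := Z.one_le_K
  have hc1 : (1 : ℝ) < c := by rw [hc]; nlinarith
  have hcpos : (0 : ℝ) < c := lt_trans one_pos hc1
  -- choose a normalized bad sequence
  have hexists : ∀ k : ℕ, ∃ e : Ω → ℝ, Z.Mem e ∧ Z.nrm e = (c ^ k)⁻¹ ∧
      ((k : ℝ) + 1) < X.nrm e := by
    intro k
    obtain ⟨g, hgZ, hg⟩ := hcon (((k : ℝ) + 1) * c ^ k) (by positivity)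
    have hz : 0 < Z.nrm g := by
      rcases lt_or_eq_of_le (Z.nrm_nonneg g) with h | h
      · exact h
      · exfalso
        have hg0 : g =ᵐ[μ] 0 := (Z.nrm_eq_zero_iff hgZ).mp h.symm
        have hx0 : X.nrm g = 0 := by
          rw [X.nrm_congr hg0, X.nrm_zero_s14]
        rw [← h] at hg
        rw [hx0] at hg
        nlinarith
    have hpos : 0 < c ^ k * Z.nrm g := by positivity
    refine ⟨(c ^ k * Z.nrm g)⁻¹ • g, Z.smul_mem _ hgZ, ?_, ?_⟩
    · rw [Z.nrm_smul _ hgZ, abs_of_pos (by positivity)]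
      field_simp
    · rw [X.nrm_smul _ (hsub g hgZ), abs_of_pos (by positivity)]
      rw [lt_inv_mul_iff₀ hpos]
      nlinarith
  choose h hmem hnrm hbig using hexists
  -- partial sums of |h k|
  set F : ℕ → Ω → ℝ := fun N ω => ∑ k ∈ Finset.range N, |h k ω| with hFdef
  have hFmem : ∀ N, Z.Mem (F N) := by
    intro N
    induction N with
    | zero =>
        have h0 : F 0 = (0 : Ω → ℝ) := by funext ω; simp [hFdef]
        rw [h0]; exact Z.zero_mem
    | succ N ih =>
        have hsucc : F (N + 1) = F N + fun ω => |h N ω| := by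
          funext ω; simp [hFdef, Finset.sum_range_succ]
        rw [hsucc]
        exact Z.add_mem ih (Z.abs_mem (hmem N))
  have habsnrm : ∀ k, Z.nrm (fun ω => |h k ω|) = (c ^ k)⁻¹ := by
    intro k; rw [Z.nrm_abs (hmem k), hnrm k]
  -- geometric tail bound
  have hKc : Z.K * c⁻¹ = 1 / 3 := by
    rw [hc, mul_inv]
    have hKne : Z.K ≠ 0 := by positivity
    field_simp
  have hsumbound : ∀ (m N : ℕ),
      Z.nrm (fun ω => ∑ k ∈ Finset.range m, |h (N + k) ω|) ≤ 2 * Z.K * (c ^ N)⁻¹ := by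
    intro m
    induction m with
    | zero =>
        intro N
        have h0 : (fun ω : Ω => ∑ k ∈ Finset.range 0, |h (N + k) ω|) = (0 : Ω → ℝ) := by
          funext ω; simp
        rw [h0, Z.nrm_zero_s14]
        positivity
    | succ m ih =>
        intro N
        have hre : (fun ω : Ω => ∑ k ∈ Finset.range (m + 1), |h (N + k) ω|) =
            (fun ω => |h N ω|) + fun ω => ∑ k ∈ Finset.range m, |h (N + 1 + k) ω| := by
          funext ω
          simp only [Pi.add_apply]
          rw [Finset.sum_range_succ', add_comm]
          congr 1
          exact Finset.sum_congr rfl fun k _ => by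
            rw [show N + (k + 1) = N + 1 + k from by omega]
        have hmem1 : Z.Mem (fun ω => |h N ω|) := Z.abs_mem (hmem N)
        have hmem2 : Z.Mem (fun ω => ∑ k ∈ Finset.range m, |h (N + 1 + k) ω|) := by
          have h2 : (fun ω => ∑ k ∈ Finset.range m, |h (N + 1 + k) ω|) =
              F (N + 1 + m) - F (N + 1) := by
            funext ω
            simp only [Pi.sub_apply, hFdef]
            have hIco : ∑ k ∈ Finset.range m, |h (N + 1 + k) ω| =
                ∑ k ∈ Finset.Ico (N + 1) (N + 1 + m), |h k ω| := by
              rw [Finset.sum_Ico_eq_sum_range,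
                show N + 1 + m - (N + 1) = m from by omega]
            rw [hIco, Finset.sum_Ico_eq_sub _ (by omega)]
          rw [h2]
          exact Z.sub_mem (hFmem _) (hFmem _)
        calc Z.nrm (fun ω : Ω => ∑ k ∈ Finset.range (m + 1), |h (N + k) ω|)
            = Z.nrm ((fun ω => |h N ω|) + fun ω => ∑ k ∈ Finset.range m, |h (N + 1 + k) ω|) := by
              rw [hre]
          _ ≤ Z.K * (Z.nrm (fun ω => |h N ω|) +
              Z.nrm (fun ω => ∑ k ∈ Finset.range m, |h (N + 1 + k) ω|)) :=
              Z.nrm_add_le hmem1 hmem2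
          _ ≤ Z.K * ((c ^ N)⁻¹ + 2 * Z.K * (c ^ (N + 1))⁻¹) := by
              have := ih (N + 1)
              have h1 := habsnrm N
              have hKpos : (0 : ℝ) < Z.K := lt_of_lt_of_le one_pos hK1
              nlinarith [this, h1]
          _ ≤ 2 * Z.K * (c ^ N)⁻¹ := by
              have hpowpos : (0 : ℝ) < c ^ N := by positivity
              have hKpos : (0 : ℝ) < Z.K := lt_of_lt_of_le one_pos hK1
              have hps : (c ^ (N + 1))⁻¹ = (c ^ N)⁻¹ * c⁻¹ := by
                rw [pow_succ, mul_inv]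
              rw [hps]
              have hinv : (0 : ℝ) < (c ^ N)⁻¹ := by positivity
              have hring : Z.K * ((c ^ N)⁻¹ + 2 * Z.K * ((c ^ N)⁻¹ * c⁻¹)) =
                  Z.K * (c ^ N)⁻¹ + 2 * (Z.K * c⁻¹) * (Z.K * (c ^ N)⁻¹) := by ring
              rw [hring, hKc]
              nlinarith [mul_pos hKpos hinv]
  -- difference formula
  have hFdiff : ∀ {n m : ℕ}, n ≤ m →
      F m - F n = fun ω => ∑ k ∈ Finset.range (m - n), |h (n + k) ω| := by
    intro n m hnm
    funext ω
    simp only [Pi.sub_apply, hFdef]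
    have hIco : ∑ k ∈ Finset.range (m - n), |h (n + k) ω| =
        ∑ k ∈ Finset.Ico n m, |h k ω| := by
      rw [Finset.sum_Ico_eq_sum_range]
    rw [hIco, Finset.sum_Ico_eq_sub _ hnm]
  -- Cauchy
  have hcauchy : ∀ ε : ℝ, 0 < ε → ∃ N : ℕ, ∀ m ≥ N, ∀ n ≥ N, Z.nrm (F m - F n) < ε := by
    intro ε hε
    have htend : Tendsto (fun N : ℕ => 2 * Z.K * (c ^ N)⁻¹) atTop (𝓝 0) := by
      have h1 : Tendsto (fun N : ℕ => (c⁻¹) ^ N) atTop (𝓝 0) :=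
        tendsto_pow_atTop_nhds_zero_of_lt_one (by positivity) (inv_lt_one_of_one_lt₀ hc1)
      have h2 : Tendsto (fun N : ℕ => 2 * Z.K * (c⁻¹) ^ N) atTop (𝓝 (2 * Z.K * 0)) :=
        h1.const_mul _
      rw [mul_zero] at h2
      simpa [inv_pow] using h2
    obtain ⟨N0, hN0⟩ := (Metric.tendsto_atTop.mp htend) ε hε
    have hbd : ∀ n ≥ N0, (2 * Z.K * (c ^ n)⁻¹) < ε := by
      intro n hn
      have := hN0 n hn
      rwa [Real.dist_eq, sub_zero, abs_of_nonneg (by positivity)] at this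
    refine ⟨N0, ?_⟩
    have hmain : ∀ {n m : ℕ}, N0 ≤ n → n ≤ m → Z.nrm (F m - F n) < ε := by
      intro n m hn hnm
      rw [hFdiff hnm]
      calc Z.nrm (fun ω => ∑ k ∈ Finset.range (m - n), |h (n + k) ω|)
          ≤ 2 * Z.K * (c ^ n)⁻¹ := hsumbound _ _
        _ < ε := hbd n hn
    intro m hm n hn
    rcases le_total n m with hnm | hmn
    · exact hmain hn hnm
    · have hneg : F m - F n = -(F n - F m) := by ring
      rw [hneg, Z.nrm_neg (Z.sub_mem (hFmem n) (hFmem m))]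
      exact hmain hm hmn
  obtain ⟨hh, hhZ, htendh⟩ := Z.complete F hFmem hcauchy
  -- F N ≤ |hh| a.e., via the positive part trick
  have hFnonneg : ∀ N ω, 0 ≤ F N ω := by
    intro N ω
    exact Finset.sum_nonneg fun k _ => abs_nonneg _
  have hFmono : ∀ {N M : ℕ}, N ≤ M → ∀ ω, F N ω ≤ F M ω := by
    intro N M hNM ω
    exact Finset.sum_le_sum_of_subset_of_nonneg
      (Finset.range_subset_range.mpr hNM) (fun k _ _ => abs_nonneg _)
  set d : ℕ → Ω → ℝ := fun N ω => max (F N ω - |hh ω|) 0 with hddef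
  have hdabs : ∀ N ω, |d N ω| ≤ |(F N - hh) ω| := by
    intro N ω
    rw [hddef]
    simp only [Pi.sub_apply]
    rw [abs_of_nonneg (le_max_right _ _)]
    refine max_le ?_ (abs_nonneg _)
    have h1 : F N ω ≤ |F N ω - hh ω| + |hh ω| := by
      have := abs_sub_abs_le_abs_sub (F N ω) (hh ω)
      rw [abs_of_nonneg (hFnonneg N ω)] at this
      linarith [this]
    linarith
  have hdmem : ∀ N, Z.Mem (d N) := by
    intro N
    refine Z.ideal_mem (Z.sub_mem (hFmem N) hhZ) ?_
      (Filter.Eventually.of_forall (hdabs N))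
    have h1 : AEStronglyMeasurable (F N) μ := Z.mem_meas (hFmem N)
    have h2 : AEStronglyMeasurable hh μ := Z.mem_meas hhZ
    have h3 : AEStronglyMeasurable (fun ω => F N ω - |hh ω|) μ :=
      h1.sub (QBFS.aesm_abs h2)
    exact h3.sup aestronglyMeasurable_const
  have hd0 : ∀ N, ∀ᵐ ω ∂μ, F N ω ≤ |hh ω| := by
    intro N
    have hkey : Z.nrm (d N) = 0 := by
      have hle : ∀ᶠ M in atTop, Z.nrm (d N) ≤ Z.nrm (hh - F M) := by
        rw [eventually_atTop]
        refine ⟨N, fun M hM => ?_⟩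
        have step1 : Z.nrm (d N) ≤ Z.nrm (d M) := by
          refine Z.ideal_nrm (hdmem M) (hdmem N) (Filter.Eventually.of_forall fun ω => ?_)
          rw [hddef]
          rw [abs_of_nonneg (le_max_right _ _), abs_of_nonneg (le_max_right _ _)]
          exact max_le_max (by linarith [hFmono hM ω]) le_rfl
        have step2 : Z.nrm (d M) ≤ Z.nrm (hh - F M) := by
          refine Z.ideal_nrm (Z.sub_mem hhZ (hFmem M)) (hdmem M)
            (Filter.Eventually.of_forall fun ω => ?_)
          have := hdabs M ω
          have habs : |(F M - hh) ω| = |(hh - F M) ω| := by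
            simp only [Pi.sub_apply]
            rw [abs_sub_comm]
          rw [habs] at this
          exact this
        exact le_trans step1 step2
      have := ge_of_tendsto htendh hle
      exact le_antisymm this (Z.nrm_nonneg _)
    have hd0' : d N =ᵐ[μ] 0 := (Z.nrm_eq_zero_iff (hdmem N)).mp hkey
    filter_upwards [hd0'] with ω hω
    have h1 : F N ω - |hh ω| ≤ d N ω := by
      rw [hddef]; exact le_max_left _ _
    rw [hω] at h1
    simp only [Pi.zero_apply] at h1
    linarith
  have hub : ∀ᵐ ω ∂μ, ∀ N, F N ω ≤ |hh ω| := ae_all_iff.mpr hd0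
  -- a.e. term bounds and convergence of terms
  have htermb : ∀ᵐ ω ∂μ, ∀ k, |h k ω| ≤ |hh ω| := by
    filter_upwards [hub] with ω hω k
    have h1 : |h k ω| ≤ F (k + 1) ω := by
      have hFv : F (k + 1) ω = ∑ i ∈ Finset.range (k + 1), |h i ω| := by rw [hFdef]
      rw [hFv]
      exact Finset.single_le_sum (f := fun i => |h i ω|) (fun i _ => abs_nonneg _)
        (Finset.self_mem_range_succ k)
    exact le_trans h1 (hω (k + 1))
  have htermt : ∀ᵐ ω ∂μ, Tendsto (fun k => |h k ω|) atTop (𝓝 0) := by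
    filter_upwards [hub] with ω hω
    have hsumm : Summable (fun k => |h k ω|) :=
      summable_of_sum_range_le (fun k => abs_nonneg _) (fun n => hω n)
    exact hsumm.tendsto_atTop_zero
  -- measurable representatives and tail suprema
  set φ : ℕ → Ω → ℝ := fun k => (Z.mem_meas (hmem k)).mk (h k) with hφdef
  have hφmeas : ∀ k, Measurable (φ k) := fun k => (Z.mem_meas (hmem k)).measurable_mk
  have hφeq : ∀ k, h k =ᵐ[μ] φ k := fun k => (Z.mem_meas (hmem k)).ae_eq_mk
  set r : ℕ → Ω → ℝ := fun N ω => ⨆ k : ℕ, |φ (N + k) ω| with hrdef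
  have hrmeas : ∀ N, Measurable (r N) := by
    intro N
    exact Measurable.iSup fun k => (hφmeas (N + k)).abs
  have hAE : ∀ᵐ ω ∂μ, (∀ k, h k ω = φ k ω) ∧ (∀ k, |h k ω| ≤ |hh ω|) ∧
      Tendsto (fun k => |h k ω|) atTop (𝓝 0) := by
    have h1 : ∀ᵐ ω ∂μ, ∀ k, h k ω = φ k ω := ae_all_iff.mpr fun k => hφeq k
    filter_upwards [h1, htermb, htermt] with ω hω1 hω2 hω3
    exact ⟨hω1, hω2, hω3⟩
  -- pointwise facts about r on the good set
  have hptwise : ∀ ω, (∀ k, h k ω = φ k ω) → (∀ k, |h k ω| ≤ |hh ω|) →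
      Tendsto (fun k => |h k ω|) atTop (𝓝 0) →
      (∀ N, 0 ≤ r N ω ∧ r N ω ≤ |hh ω| ∧ |h N ω| ≤ r N ω) ∧
      Antitone (fun N => r N ω) ∧ Tendsto (fun N => r N ω) atTop (𝓝 0) := by
    intro ω heq hbd htend
    have hφbd : ∀ k, |φ k ω| ≤ |hh ω| := fun k => by rw [← heq k]; exact hbd k
    have hbdd : ∀ N, BddAbove (Set.range fun k => |φ (N + k) ω|) := by
      intro N
      exact ⟨|hh ω|, by rintro x ⟨k, rfl⟩; exact hφbd _⟩
    have hbasic : ∀ N, 0 ≤ r N ω ∧ r N ω ≤ |hh ω| ∧ |h N ω| ≤ r N ω := by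
      intro N
      refine ⟨Real.iSup_nonneg fun k => abs_nonneg _, ciSup_le fun k => hφbd _, ?_⟩
      have h0 : |φ (N + 0) ω| ≤ r N ω := le_ciSup (hbdd N) 0
      rw [Nat.add_zero] at h0
      rw [heq N]
      exact h0
    refine ⟨hbasic, ?_, ?_⟩
    · refine antitone_nat_of_succ_le fun N => ?_
      refine ciSup_le fun k => ?_
      have h1 : |φ (N + (k + 1)) ω| ≤ r N ω := le_ciSup (hbdd N) (k + 1)
      have h2 : N + 1 + k = N + (k + 1) := by omega
      rw [h2]
      exact h1
    · rw [Metric.tendsto_atTop]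
      intro ε hε
      obtain ⟨K0, hK0⟩ := (Metric.tendsto_atTop.mp htend) (ε / 2) (by linarith)
      refine ⟨K0, fun N hN => ?_⟩
      have hrb : r N ω ≤ ε / 2 := by
        refine ciSup_le fun k => ?_
        rw [← heq (N + k)]
        have := hK0 (N + k) (by omega)
        rw [Real.dist_eq, sub_zero, abs_abs] at this
        linarith [this]
      rw [Real.dist_eq, sub_zero, abs_of_nonneg (hbasic N).1]
      linarith
  -- X-membership of r N and σ-order continuity
  have hhX : X.Mem hh := hsub hh hhZ
  have hrXmem : ∀ N, X.Mem (r N) := by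
    intro N
    refine X.ideal_mem hhX (hrmeas N).aestronglyMeasurable ?_
    filter_upwards [hAE] with ω hω
    have := (hptwise ω hω.1 hω.2.1 hω.2.2).1 N
    rw [abs_of_nonneg this.1]
    exact this.2.1
  have hranti : ∀ᵐ ω ∂μ, Antitone fun N => r N ω := by
    filter_upwards [hAE] with ω hω
    exact (hptwise ω hω.1 hω.2.1 hω.2.2).2.1
  have hrtend : ∀ᵐ ω ∂μ, Tendsto (fun N => r N ω) atTop (𝓝 0) := by
    filter_upwards [hAE] with ω hω
    exact (hptwise ω hω.1 hω.2.1 hω.2.2).2.2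
  have hXr : Tendsto (fun N => X.nrm (r N)) atTop (𝓝 0) := hoc r hrXmem hranti hrtend
  have hhn : ∀ N, X.nrm (h N) ≤ X.nrm (r N) := by
    intro N
    refine X.ideal_nrm (hrXmem N) (hsub _ (hmem N)) ?_
    filter_upwards [hAE] with ω hω
    have := (hptwise ω hω.1 hω.2.1 hω.2.2).1 N
    rw [abs_of_nonneg this.1]
    exact this.2.2
  -- contradiction
  have hev : ∀ᶠ N in atTop, X.nrm (r N) < 1 := hXr.eventually (gt_mem_nhds one_pos)
  obtain ⟨N, hN⟩ := hev.exists
  have h1 : ((N : ℝ) + 1) < X.nrm (h N) := hbig N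
  have h2 : X.nrm (h N) ≤ X.nrm (r N) := hhn N
  have h3 : (0 : ℝ) ≤ (N : ℝ) := Nat.cast_nonneg N
  linarith

/-- Core membership for elements of a `q`-concave subspace. -/
lemma core_of_subspace (X Z : QBFS μ) (hoc : SigmaOC μ X.Mem X.nrm)
    (q : ℝ) (hq : 0 < q) (hconc : SpaceQConcave Z.Mem Z.nrm q)
    (hsub : ∀ f : Ω → ℝ, Z.Mem f → X.Mem f) (f : Ω → ℝ) (hf : Z.Mem f) :
    coreMem μ X.Mem X.nrm q f := by
  obtain ⟨M, hM, hMle⟩ := incl_cont X Z hoc hsub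
  obtain ⟨C, hC, hCle⟩ := hconc
  refine ⟨hsub f hf, ⟨M * (C * Z.nrm f), ?_⟩⟩
  rintro a ⟨n, g, hgX, hae, rfl⟩
  have hdom : ∀ j, ∀ᵐ ω ∂μ, |g j ω| ≤ |f ω| := by
    intro j
    filter_upwards [hae] with ω hω
    calc |g j ω| = (|g j ω| ^ q) ^ (1 / q) := by
          rw [← Real.rpow_mul (abs_nonneg _), mul_one_div, div_self hq.ne', Real.rpow_one]
      _ ≤ (∑ i, |g i ω| ^ q) ^ (1 / q) := by
          refine Real.rpow_le_rpow (Real.rpow_nonneg (abs_nonneg _) _) ?_ (by positivity)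
          exact Finset.single_le_sum (f := fun i => |g i ω| ^ q)
            (fun i _ => Real.rpow_nonneg (abs_nonneg _) _) (Finset.mem_univ j)
      _ = |f ω| := hω.symm
  have hgZ : ∀ j, Z.Mem (g j) := fun j => Z.ideal_mem hf (X.mem_meas (hgX j)) (hdom j)
  have hcon := hCle n g hgZ
  have heqn : Z.nrm (fun ω => (∑ j, |g j ω| ^ q) ^ (1 / q)) = Z.nrm f := by
    have h1 : (fun ω => (∑ j, |g j ω| ^ q) ^ (1 / q)) =ᵐ[μ] fun ω => |f ω| := by
      filter_upwards [hae] with ω hω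
      exact hω.symm
    rw [Z.nrm_congr h1, Z.nrm_abs hf]
  rw [heqn] at hcon
  have hsum1 : (0 : ℝ) ≤ ∑ j, Z.nrm (g j) ^ q :=
    Finset.sum_nonneg fun j _ => Real.rpow_nonneg (Z.nrm_nonneg _) _
  calc (∑ j, X.nrm (g j) ^ q) ^ (1 / q)
      ≤ (∑ j, (M * Z.nrm (g j)) ^ q) ^ (1 / q) := by
        refine Real.rpow_le_rpow
          (Finset.sum_nonneg fun j _ => Real.rpow_nonneg (X.nrm_nonneg _) _) ?_
          (by positivity)
        exact Finset.sum_le_sum fun j _ =>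
          Real.rpow_le_rpow (X.nrm_nonneg _) (hMle _ (hgZ j)) hq.le
    _ = (M ^ q * ∑ j, Z.nrm (g j) ^ q) ^ (1 / q) := by
        rw [Finset.mul_sum]
        congr 1
        exact Finset.sum_congr rfl fun j _ => Real.mul_rpow hM.le (Z.nrm_nonneg _)
    _ = M * (∑ j, Z.nrm (g j) ^ q) ^ (1 / q) := by
        rw [Real.mul_rpow (Real.rpow_nonneg hM.le _) hsum1,
          ← Real.rpow_mul hM.le, mul_one_div, div_self hq.ne', Real.rpow_one]
    _ ≤ M * (C * Z.nrm f) := mul_le_mul_of_nonneg_left hcon hM.le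

end Aux

/-- `qX(μ)` is the `q`-concave core of `X(μ)`: every `q`-concave quasi-B.f.s. over `μ`
contained in `X(μ)` is contained in `qX(μ)`; in particular `qX(μ) = X(μ)` when `X(μ)` is
`q`-concave. -/
theorem core_is_largest (μ : Measure Ω) (X : QBFS μ) (hoc : SigmaOC μ X.Mem X.nrm)
    (q : ℝ) (hq : 0 < q) :
    (∀ Z : QBFS μ, SpaceQConcave Z.Mem Z.nrm q → (∀ f : Ω → ℝ, Z.Mem f → X.Mem f) →
      ∀ f : Ω → ℝ, Z.Mem f → coreMem μ X.Mem X.nrm q f) ∧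
    (SpaceQConcave X.Mem X.nrm q →
      ∀ f : Ω → ℝ, X.Mem f ↔ coreMem μ X.Mem X.nrm q f) := by
  constructor
  · intro Z hZc hZsub f hf
    exact core_of_subspace X Z hoc q hq hZc hZsub f hf
  · intro hXc f
    constructor
    · intro hf
      exact core_of_subspace X X hoc q hq hXc (fun _ h => h) f hf
    · exact fun h => h.1
end

section
/- Let X(μ) be a σ-order continuous quasi-Banach function space and p, q ∈ (0,∞). Then (qX(μ))^p = (qp)(X(μ)^p) with equal quasi-norms; that is, the p-power of the q-concave core qX(μ) equals the (qp)-concave core of the p-power X(μ)^p, and ‖f‖_{(qX(μ))^p} = ‖f‖_{(qp)(X(μ)^p)} for all f. -/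
open MeasureTheory Filter Topology

variable {Ω : Type*} [MeasurableSpace Ω]

/-- Membership in the `p`-power of a function space. -/
def powMem (Mem : (Ω → ℝ) → Prop) (p : ℝ) (f : Ω → ℝ) : Prop :=
  Mem (fun ω => |f ω| ^ p)

/-- The quasi-norm of the `p`-power of a function space. -/
noncomputable def powNrm (nrm : (Ω → ℝ) → ℝ) (p : ℝ) (f : Ω → ℝ) : ℝ :=
  nrm (fun ω => |f ω| ^ p) ^ (1 / p)

section Helpers

variable {Ω : Type*} [MeasurableSpace Ω]

private lemma QBFS.abs_mem_s15 {μ : Measure Ω} (X : QBFS μ) {g : Ω → ℝ} (hg : X.Mem g) :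
    X.Mem (fun ω => |g ω|) :=
  X.ideal_mem hg ((X.mem_meas hg).norm.congr (by simp [Real.norm_eq_abs]))
    (Filter.Eventually.of_forall fun ω => by simp [abs_abs])

private lemma QBFS.nrm_abs_s15 {μ : Measure Ω} (X : QBFS μ) {g : Ω → ℝ} (hg : X.Mem g) :
    X.nrm (fun ω => |g ω|) = X.nrm g := by
  refine le_antisymm (X.ideal_nrm hg (X.abs_mem_s15 hg)
      (Filter.Eventually.of_forall fun ω => by simp [abs_abs]))
    (X.ideal_nrm (X.abs_mem_s15 hg) hg
      (Filter.Eventually.of_forall fun ω => by simp [abs_abs]))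

private lemma rpow_sum_aux {p q : ℝ} (hp : p ≠ 0) (hq : q ≠ 0) {S : ℝ} (hS : 0 ≤ S) :
    S ^ (1 / (q * p)) = (S ^ (1 / q)) ^ (1 / p) := by
  rw [← Real.rpow_mul hS]
  congr 1
  field_simp

private lemma rpow_qp_aux {p q x : ℝ} (hp : p ≠ 0) (hx : 0 ≤ x) :
    (x ^ (1 / p)) ^ (q * p) = x ^ q := by
  rw [← Real.rpow_mul hx]
  congr 1
  field_simp

/-- elements of a `coreSet` of a QBFS are nonnegative -/
private lemma coreSet_nonneg {μ : Measure Ω} (X : QBFS μ) (q : ℝ) (F : Ω → ℝ)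
    {a : ℝ} (ha : a ∈ coreSet μ X.Mem X.nrm q F) : 0 ≤ a := by
  obtain ⟨n, g, -, -, rfl⟩ := ha
  exact Real.rpow_nonneg (Finset.sum_nonneg fun j _ =>
    Real.rpow_nonneg (X.nrm_nonneg _) q) _

private lemma self_mem_coreSet {μ : Measure Ω} (X : QBFS μ) {q : ℝ} (hq : 0 < q)
    {F : Ω → ℝ} (hF : X.Mem F) : X.nrm F ∈ coreSet μ X.Mem X.nrm q F := by
  refine ⟨1, fun _ => F, fun _ => hF, Filter.Eventually.of_forall fun ω => ?_, ?_⟩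
  · rw [Fin.sum_univ_one, ← Real.rpow_mul (abs_nonneg _), mul_one_div, div_self hq.ne',
      Real.rpow_one]
  · rw [Fin.sum_univ_one, ← Real.rpow_mul (X.nrm_nonneg _), mul_one_div, div_self hq.ne',
      Real.rpow_one]

/-- The key set identity. -/
private lemma coreSet_pow {μ : Measure Ω} (X : QBFS μ) {p q : ℝ} (hp : 0 < p) (hq : 0 < q)
    (f : Ω → ℝ) :
    coreSet μ (powMem X.Mem p) (powNrm X.nrm p) (q * p) f =
      (fun x => x ^ (1 / p)) '' coreSet μ X.Mem X.nrm q (fun ω => |f ω| ^ p) := by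
  have hqp : q * p ≠ 0 := by positivity
  ext b
  constructor
  · rintro ⟨n, h, hmem, hae, rfl⟩
    refine ⟨(∑ j, X.nrm (fun ω => |h j ω| ^ p) ^ q) ^ (1 / q),
      ⟨n, fun j => fun ω => |h j ω| ^ p, fun j => hmem j, ?_, rfl⟩, ?_⟩
    · filter_upwards [hae] with ω hω
      have hT : (0:ℝ) ≤ ∑ j, |h j ω| ^ (q * p) :=
        Finset.sum_nonneg fun j _ => Real.rpow_nonneg (abs_nonneg _) _
      have h1 : |(|f ω| ^ p)| = |f ω| ^ p := abs_of_nonneg (Real.rpow_nonneg (abs_nonneg _) _)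
      have h2 : ∀ j : Fin n, |(|h j ω| ^ p)| ^ q = |h j ω| ^ (q * p) := fun j => by
        rw [abs_of_nonneg (Real.rpow_nonneg (abs_nonneg _) _), ← Real.rpow_mul (abs_nonneg _),
          mul_comm]
      calc |(|f ω| ^ p)| = |f ω| ^ p := h1
        _ = ((∑ j, |h j ω| ^ (q * p)) ^ (1 / (q * p))) ^ p := by rw [← hω]
        _ = (∑ j, |h j ω| ^ (q * p)) ^ (1 / q) := by
            rw [← Real.rpow_mul hT]; congr 1; field_simp
        _ = (∑ j, |(|h j ω| ^ p)| ^ q) ^ (1 / q) := by simp_rw [h2]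
    · have h3 : ∀ j : Fin n, powNrm X.nrm p (h j) ^ (q * p) =
          X.nrm (fun ω => |h j ω| ^ p) ^ q := fun j =>
        rpow_qp_aux hp.ne' (X.nrm_nonneg _)
      have hS : (0:ℝ) ≤ ∑ j, X.nrm (fun ω => |h j ω| ^ p) ^ q :=
        Finset.sum_nonneg fun j _ => Real.rpow_nonneg (X.nrm_nonneg _) _
      simp_rw [h3]
      exact (rpow_sum_aux hp.ne' hq.ne' hS).symm
  · rintro ⟨a, ⟨n, g, hmem, hae, rfl⟩, rfl⟩
    set h : Fin n → Ω → ℝ := fun j ω => |g j ω| ^ (1 / p) with hh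
    have habs : ∀ j (ω : Ω), |h j ω| = |g j ω| ^ (1 / p) := fun j ω =>
      abs_of_nonneg (Real.rpow_nonneg (abs_nonneg _) _)
    have hmem' : ∀ j, powMem X.Mem p (h j) := by
      intro j
      have : (fun ω => |h j ω| ^ p) = fun ω => |g j ω| := by
        funext ω
        rw [habs, ← Real.rpow_mul (abs_nonneg _), one_div, inv_mul_cancel₀ hp.ne',
          Real.rpow_one]
      rw [powMem, this]
      exact X.abs_mem_s15 (hmem j)
    refine ⟨n, h, hmem', ?_, ?_⟩
    · filter_upwards [hae] with ω hω
      have hT : (0:ℝ) ≤ ∑ j, |g j ω| ^ q :=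
        Finset.sum_nonneg fun j _ => Real.rpow_nonneg (abs_nonneg _) _
      have h2 : ∀ j : Fin n, |h j ω| ^ (q * p) = |g j ω| ^ q := fun j => by
        rw [habs]; exact rpow_qp_aux hp.ne' (abs_nonneg _)
      have h1 : |(|f ω| ^ p)| = |f ω| ^ p := abs_of_nonneg (Real.rpow_nonneg (abs_nonneg _) _)
      rw [h1] at hω
      have hfω : |f ω| = ((∑ j, |g j ω| ^ q) ^ (1 / q)) ^ (1 / p) := by
        have := congrArg (fun x : ℝ => x ^ (1 / p)) hω
        simpa [← Real.rpow_mul (abs_nonneg (f ω)), mul_one_div, div_self hp.ne',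
          mul_inv_cancel₀ hp.ne'] using this
      rw [hfω]
      simp_rw [h2]
      exact (rpow_sum_aux hp.ne' hq.ne' hT).symm
    · have h3 : ∀ j : Fin n, powNrm X.nrm p (h j) ^ (q * p) = X.nrm (g j) ^ q := by
        intro j
        have : (fun ω => |h j ω| ^ p) = fun ω => |g j ω| := by
          funext ω
          rw [habs, ← Real.rpow_mul (abs_nonneg _), one_div, inv_mul_cancel₀ hp.ne',
            Real.rpow_one]
        rw [powNrm, this, X.nrm_abs_s15 (hmem j)]
        exact rpow_qp_aux hp.ne' (X.nrm_nonneg _)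
      have hS : (0:ℝ) ≤ ∑ j, X.nrm (g j) ^ q :=
        Finset.sum_nonneg fun j _ => Real.rpow_nonneg (X.nrm_nonneg _) _
      simp_rw [h3]
      exact (rpow_sum_aux hp.ne' hq.ne' hS).symm

end Helpers

/-- `(qX(μ))^p = (qp)(X(μ)^p)` with equal quasi-norms. -/
theorem powSpace_core (μ : Measure Ω) (X : QBFS μ) (hoc : SigmaOC μ X.Mem X.nrm)
    (p q : ℝ) (hp : 0 < p) (hq : 0 < q) :
    (∀ f : Ω → ℝ, powMem (coreMem μ X.Mem X.nrm q) p f ↔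
      coreMem μ (powMem X.Mem p) (powNrm X.nrm p) (q * p) f) ∧
    (∀ f : Ω → ℝ, powMem (coreMem μ X.Mem X.nrm q) p f →
      powNrm (coreNrm μ X.Mem X.nrm q) p f =
        coreNrm μ (powMem X.Mem p) (powNrm X.nrm p) (q * p) f) := by
  have key : ∀ f : Ω → ℝ, coreSet μ (powMem X.Mem p) (powNrm X.nrm p) (q * p) f
      = (fun x => x ^ (1 / p)) '' coreSet μ X.Mem X.nrm q (fun ω => |f ω| ^ p) :=
    fun f => coreSet_pow X hp hq f
  have bdd : ∀ f : Ω → ℝ, BddAbove (coreSet μ X.Mem X.nrm q (fun ω => |f ω| ^ p)) ↔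
      BddAbove (coreSet μ (powMem X.Mem p) (powNrm X.nrm p) (q * p) f) := by
    intro f
    rw [key f]
    constructor
    · rintro ⟨M, hM⟩
      refine ⟨M ^ (1 / p), ?_⟩
      rintro b ⟨a, ha, rfl⟩
      exact Real.rpow_le_rpow (coreSet_nonneg X q _ ha) (hM ha) (by positivity)
    · rintro ⟨N, hN⟩
      refine ⟨max N 0 ^ p, ?_⟩
      intro a ha
      have h0 : 0 ≤ a := coreSet_nonneg X q _ ha
      have h1 : a ^ (1 / p) ≤ max N 0 := le_max_of_le_left (hN ⟨a, ha, rfl⟩)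
      calc a = (a ^ (1 / p)) ^ p := by
            rw [← Real.rpow_mul h0, one_div, inv_mul_cancel₀ hp.ne', Real.rpow_one]
        _ ≤ max N 0 ^ p := Real.rpow_le_rpow (Real.rpow_nonneg h0 _) h1 hp.le
  constructor
  · intro f
    constructor
    · rintro ⟨hmem, hbdd⟩
      exact ⟨hmem, (bdd f).mp hbdd⟩
    · rintro ⟨hmem, hbdd⟩
      exact ⟨hmem, (bdd f).mpr hbdd⟩
  · rintro f ⟨hmem, hbdd⟩
    rw [powNrm, coreNrm]
    show sSup (coreSet μ X.Mem X.nrm q (fun ω => |f ω| ^ p)) ^ (1 / p)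
      = sSup (coreSet μ (powMem X.Mem p) (powNrm X.nrm p) (q * p) f)
    rw [key f]
    set S := coreSet μ X.Mem X.nrm q (fun ω => |f ω| ^ p) with hS
    have hSne : S.Nonempty := ⟨X.nrm _, self_mem_coreSet X hq hmem⟩
    have hIbdd : BddAbove ((fun x => x ^ (1 / p)) '' S) := by
      obtain ⟨M, hM⟩ := hbdd
      refine ⟨M ^ (1 / p), ?_⟩
      rintro b ⟨a, ha, rfl⟩
      exact Real.rpow_le_rpow (coreSet_nonneg X q _ ha) (hM ha) (by positivity)
    have hsSupS : 0 ≤ sSup S := by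
      obtain ⟨a, ha⟩ := hSne
      exact le_trans (coreSet_nonneg X q _ ha) (le_csSup hbdd ha)
    refine le_antisymm ?_ (csSup_le (hSne.image _) ?_)
    · set N := sSup ((fun x => x ^ (1 / p)) '' S) with hN
      have hNnn : 0 ≤ N := by
        obtain ⟨a, ha⟩ := hSne
        exact le_trans (Real.rpow_nonneg (coreSet_nonneg X q _ ha) _)
          (le_csSup hIbdd ⟨a, ha, rfl⟩)
      have hle : sSup S ≤ N ^ p := by
        refine csSup_le hSne fun a ha => ?_
        have h1 : a ^ (1 / p) ≤ N := le_csSup hIbdd ⟨a, ha, rfl⟩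
        have h0 := coreSet_nonneg X q _ ha
        calc a = (a ^ (1 / p)) ^ p := by
              rw [← Real.rpow_mul h0, one_div, inv_mul_cancel₀ hp.ne', Real.rpow_one]
          _ ≤ N ^ p := Real.rpow_le_rpow (Real.rpow_nonneg h0 _) h1 hp.le
      calc sSup S ^ (1 / p) ≤ (N ^ p) ^ (1 / p) :=
            Real.rpow_le_rpow hsSupS hle (by positivity)
        _ = N := by
            rw [← Real.rpow_mul hNnn, mul_one_div, div_self hp.ne', Real.rpow_one]
    · rintro b ⟨a, ha, rfl⟩
      exact Real.rpow_le_rpow (coreSet_nonneg X q _ ha) (le_csSup hbdd ha) (by positivity)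
end
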